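/- For all real parameters α, β, γ, the functions c₁(a,b,x,y) = ab and c₂(a,b,x,y) = αx² + βy² + γ(a² + b²) are Casimir functions of the bracket {·,·}_{**} on ℝ⁴: {c₁, f}_{**} = 0 and {c₂, f}_{**} = 0 for every smooth function f: ℝ⁴ → ℝ. -/

import Mathlib

/-- The `i`-th partial derivative of `f : ℝⁿ → ℝ` at `v`. -/
noncomputable def pd {n : ℕ} (i : Fin n) (f : (Fin n → ℝ) → ℝ) (v : Fin n → ℝ) : ℝ :=
  fderiv ℝ f v (Pi.single i 1)

/-- The bracket `{·,·}_{**}` on `ℝ⁴` with coordinates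
`(a,b,x,y) = (v 0, v 1, v 2, v 3)`, determined on coordinate functions by
`{x,a} = βya`, `{x,b} = −βyb`, `{y,a} = −αxa`, `{y,b} = αxb`, `{a,b} = 0`,
`{x,y} = γ(b² − a²)`. -/
noncomputable def ssBr (α β γ : ℝ) (f g : (Fin 4 → ℝ) → ℝ) (v : Fin 4 → ℝ) : ℝ :=
  β * v 3 * v 0 * (pd 2 f v * pd 0 g v - pd 0 f v * pd 2 g v)
  - β * v 3 * v 1 * (pd 2 f v * pd 1 g v - pd 1 f v * pd 2 g v)
  - α * v 2 * v 0 * (pd 3 f v * pd 0 g v - pd 0 f v * pd 3 g v)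
  + α * v 2 * v 1 * (pd 3 f v * pd 1 g v - pd 1 f v * pd 3 g v)
  + γ * (v 1 ^ 2 - v 0 ^ 2) * (pd 2 f v * pd 3 g v - pd 3 f v * pd 2 g v)

lemma hasfd_proj (j : Fin 4) (v : Fin 4 → ℝ) :
    HasFDerivAt (fun v : Fin 4 → ℝ => v j)
      (ContinuousLinearMap.proj (R := ℝ) (φ := fun _ : Fin 4 => ℝ) j) v :=
  (ContinuousLinearMap.proj (R := ℝ) (φ := fun _ : Fin 4 => ℝ) j).hasFDerivAt

lemma pd_c1 (i : Fin 4) (v : Fin 4 → ℝ) :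
    pd i (fun v => v 0 * v 1) v =
      v 0 * (Pi.single i 1 : Fin 4 → ℝ) 1 + v 1 * (Pi.single i 1 : Fin 4 → ℝ) 0 := by
  have h : HasFDerivAt (fun v : Fin 4 → ℝ => v 0 * v 1) _ v := (hasfd_proj 0 v).mul (hasfd_proj 1 v)
  simp [pd, h.fderiv]

lemma pd_c2 (α β γ : ℝ) (i : Fin 4) (v : Fin 4 → ℝ) :
    pd i (fun v => α * v 2 ^ 2 + β * v 3 ^ 2 + γ * (v 0 ^ 2 + v 1 ^ 2)) v =
      2 * α * v 2 * (Pi.single i 1 : Fin 4 → ℝ) 2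
      + 2 * β * v 3 * (Pi.single i 1 : Fin 4 → ℝ) 3
      + 2 * γ * v 0 * (Pi.single i 1 : Fin 4 → ℝ) 0
      + 2 * γ * v 1 * (Pi.single i 1 : Fin 4 → ℝ) 1 := by
  have hs : ∀ j : Fin 4, HasFDerivAt (fun v : Fin 4 → ℝ => v j ^ 2)
      ((2 * v j) • ContinuousLinearMap.proj (R := ℝ) (φ := fun _ : Fin 4 => ℝ) j) v := by
    intro j
    have : HasFDerivAt (fun v : Fin 4 → ℝ => v j * v j) _ v := (hasfd_proj j v).mul (hasfd_proj j v)
    simpa [sq, two_mul, add_smul] using this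
  have h : HasFDerivAt (fun v : Fin 4 → ℝ => α * v 2 ^ 2 + β * v 3 ^ 2 + γ * (v 0 ^ 2 + v 1 ^ 2)) _ v := ((((hs 2).const_mul α).add ((hs 3).const_mul β)).add
      (((hs 0).add (hs 1)).const_mul γ))
  rw [pd, h.fderiv]
  simp
  ring

/-- `c₁ = ab` and `c₂ = αx² + βy² + γ(a² + b²)` are Casimir functions of the
bracket `{·,·}_{**}` on `ℝ⁴`. -/
theorem ss_casimirs (α β γ : ℝ) :
    ∀ f : (Fin 4 → ℝ) → ℝ, ContDiff ℝ (⊤ : ℕ∞) f →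
      ssBr α β γ (fun v => v 0 * v 1) f = 0 ∧
      ssBr α β γ
        (fun v => α * v 2 ^ 2 + β * v 3 ^ 2 + γ * (v 0 ^ 2 + v 1 ^ 2)) f = 0 := by
  intro f _
  constructor <;> funext v <;>
  · simp [ssBr, pd_c1, pd_c2, Pi.single_apply]
    ring
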